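/- Let L ≥ 1, β > 0, and let γ_1 ≥ γ_2 ≥ … ≥ γ_L > 0. Let β_j ≥ 0 and p_j ≥ 0 for j = 1,…,L, with β_j · p_j > 0 for at least one j. Define R(ρ) := Σ_{j=1}^L β_j · log(1 + p_j · f(γ_j,β,ρ)) for ρ > 0. If ρ* > 0 satisfies R(ρ*) ≥ R(ρ) for all ρ > 0, then β/γ_1 ≤ ρ* ≤ β/γ_L. -/

import Mathlib

/-- The deterministic equivalent `g(β,ρ)`: the unique positive solution of
`g·(ρ + β/(1+g)) = 1`, given in closed form. -/
noncomputable def gfun (β ρ : ℝ) : ℝ :=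
  ((1 - ρ - β) + Real.sqrt ((ρ + β - 1) ^ 2 + 4 * ρ)) / (2 * ρ)

/-- The limiting SINR coefficient `f(γ,β,ρ)` at effective SNR γ. -/
noncomputable def ffun (γ β ρ : ℝ) : ℝ :=
  gfun β ρ * (γ + (γ * ρ / β) * (1 + gfun β ρ) ^ 2) / (γ + (1 + gfun β ρ) ^ 2)

/-!
Eliminating ρ through the quadratic relation `ρ g (1 + g) = 1 + (1 - β) g` writes
`f(γ, β, ρ) = φ(g(ρ))` with `φ(x) = γ((1 + x)² - β x²) / (β (γ + (1 + x)²))`, and `g` is strictly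
decreasing in ρ. For `x > y`, `φ(x) - φ(y)` has the sign of
`γ (2 + (1 - β)(x + y)) - β (x (1 + y) + y (1 + x))`, which is negative while `γ ρ ≤ β` and positive
once `γ ρ ≥ β`. Hence each `f(γ_j, β, ·)` increases strictly on `(0, β/γ_j]` and decreases strictly
on `[β/γ_j, ∞)`. If `ρ* < β/γ_1`, moving to `β/γ_1 ≤ β/γ_j` strictly increases every `f(γ_j, β, ·)`,
hence strictly increases `R`, as some `β_j p_j` is positive; symmetrically if `ρ* > β/γ_L`.
-/

open Set

noncomputable def ffunOfG (γ β x : ℝ) : ℝ :=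
  γ * ((1 + x) ^ 2 - β * x ^ 2) / (β * (γ + (1 + x) ^ 2))

section gfun

variable {β ρ : ℝ}

lemma gfun_pos (hρ : 0 < ρ) : 0 < gfun β ρ := by
  have hs : Real.sqrt ((ρ + β - 1) ^ 2 + 4 * ρ) ^ 2 = (ρ + β - 1) ^ 2 + 4 * ρ :=
    Real.sq_sqrt (by positivity)
  have : ρ + β - 1 < Real.sqrt ((ρ + β - 1) ^ 2 + 4 * ρ) := by
    nlinarith [Real.sqrt_nonneg ((ρ + β - 1) ^ 2 + 4 * ρ)]
  exact div_pos (by linarith) (by linarith)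

lemma mul_gfun_mul_one_add_gfun (hρ : 0 < ρ) :
    ρ * gfun β ρ * (1 + gfun β ρ) = 1 + (1 - β) * gfun β ρ := by
  have hs := Real.sq_sqrt (by positivity : 0 ≤ (ρ + β - 1) ^ 2 + 4 * ρ)
  rw [gfun]
  generalize Real.sqrt ((ρ + β - 1) ^ 2 + 4 * ρ) = s at hs ⊢
  field_simp
  linear_combination hs

lemma one_add_one_sub_mul_gfun_pos (hρ : 0 < ρ) : 0 < 1 + (1 - β) * gfun β ρ := by
  rw [← mul_gfun_mul_one_add_gfun hρ]
  have := gfun_pos (β := β) hρ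
  positivity

lemma gfun_strictAntiOn (β : ℝ) : StrictAntiOn (gfun β) (Ioi 0) := by
  intro ρ₁ (hρ₁ : 0 < ρ₁) ρ₂ (hρ₂ : 0 < ρ₂) h12
  have hq₁ := mul_gfun_mul_one_add_gfun (β := β) hρ₁
  have hq₂ := mul_gfun_mul_one_add_gfun (β := β) hρ₂
  have hu := one_add_one_sub_mul_gfun_pos (β := β) hρ₁
  have ha := gfun_pos (β := β) hρ₁
  have hb := gfun_pos (β := β) hρ₂
  set a := gfun β ρ₁
  set b := gfun β ρ₂
  have key : (ρ₂ - ρ₁) * (a * (1 + a) * (b * (1 + b))) =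
      (a - b) * ((1 + a) * (1 + b) - β * a * b) := by
    linear_combination (a * (1 + a)) * hq₂ - (b * (1 + b)) * hq₁
  have hfac : 0 < (1 + a) * (1 + b) - β * a * b := by nlinarith [mul_pos hb hu]
  have hlhs : 0 < (ρ₂ - ρ₁) * (a * (1 + a) * (b * (1 + b))) := by
    have := sub_pos.2 h12
    positivity
  exact sub_pos.1 (pos_of_mul_pos_left (key ▸ hlhs) hfac.le)

lemma ffun_eq_ffunOfG_gfun {γ : ℝ} (hγ : 0 ≤ γ) (hβ : β ≠ 0) (hρ : 0 < ρ) :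
    ffun γ β ρ = ffunOfG γ β (gfun β ρ) := by
  have hq := mul_gfun_mul_one_add_gfun (β := β) hρ
  have hD : 0 < γ + (1 + gfun β ρ) ^ 2 := by have := gfun_pos (β := β) hρ; positivity
  have hnum : β * (gfun β ρ * (γ + γ * ρ / β * (1 + gfun β ρ) ^ 2)) =
      γ * ((1 + gfun β ρ) ^ 2 - β * gfun β ρ ^ 2) := by
    field_simp
    linear_combination γ * (1 + gfun β ρ) * hq
  rw [ffun, ffunOfG, div_eq_div_iff hD.ne' (mul_ne_zero hβ hD.ne'), ← hnum]
  ring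

end gfun

section ffunOfG

variable {γ β a b : ℝ}

lemma ffunOfG_pos (hγ : 0 < γ) (hβ : 0 < β) (ha : 0 < a) (hu : 0 < 1 + (1 - β) * a) :
    0 < ffunOfG γ β a := by
  have : 0 < (1 + a) ^ 2 - β * a ^ 2 := by nlinarith [mul_pos ha hu]
  unfold ffunOfG
  positivity

lemma ffunOfG_sub_ffunOfG (hγ : 0 < γ) (hβ : 0 < β) :
    ffunOfG γ β a - ffunOfG γ β b =
      γ * (a - b) * (γ * (2 + (1 - β) * (a + b)) - β * (a * (1 + b) + b * (1 + a))) /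
        (β * (γ + (1 + a) ^ 2) * (γ + (1 + b) ^ 2)) := by
  unfold ffunOfG
  field_simp
  ring

/-- For `a = g(β, ρ₁)` and `b = g(β, ρ₂)`, `hcrit` is `γ ρ₂ ≤ β` multiplied by `b (1 + b)`, and in
`ffunOfG_lt_of_le_mul` it is `β ≤ γ ρ₁` multiplied by `a (1 + a)`. -/
lemma ffunOfG_lt_of_mul_le (hγ : 0 < γ) (hβ : 0 < β) (hb : 0 < b) (hab : b < a)
    (hu : 0 < 1 + (1 - β) * a) (hv : 0 < 1 + (1 - β) * b)
    (hcrit : γ * (1 + (1 - β) * b) ≤ β * (b * (1 + b))) :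
    ffunOfG γ β a < ffunOfG γ β b := by
  have key : (1 + (1 - β) * b) *
      (γ * (2 + (1 - β) * (a + b)) - β * (a * (1 + b) + b * (1 + a))) =
      (2 + (1 - β) * (a + b)) * (γ * (1 + (1 - β) * b) - β * (b * (1 + b))) -
        β * (a - b) * ((1 + b) ^ 2 - β * b ^ 2) := by
    ring
  have hN : 0 < β * (a - b) * ((1 + b) ^ 2 - β * b ^ 2) := by
    have : 0 < (1 + b) ^ 2 - β * b ^ 2 := by nlinarith [mul_pos hb hv]
    have := sub_pos.2 hab
    positivity
  have hK : γ * (2 + (1 - β) * (a + b)) - β * (a * (1 + b) + b * (1 + a)) < 0 := by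
    nlinarith [mul_nonpos_of_nonneg_of_nonpos (by linarith : (0 : ℝ) ≤ 2 + (1 - β) * (a + b))
      (sub_nonpos.2 hcrit)]
  rw [← sub_neg, ffunOfG_sub_ffunOfG hγ hβ]
  exact div_neg_of_neg_of_pos (mul_neg_of_pos_of_neg (by nlinarith) hK) (by positivity)

lemma ffunOfG_lt_of_le_mul (hγ : 0 < γ) (hβ : 0 < β) (hb : 0 < b) (hab : b < a)
    (hu : 0 < 1 + (1 - β) * a) (hv : 0 < 1 + (1 - β) * b)
    (hcrit : β * (a * (1 + a)) ≤ γ * (1 + (1 - β) * a)) :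
    ffunOfG γ β b < ffunOfG γ β a := by
  have key : (1 + (1 - β) * a) *
      (γ * (2 + (1 - β) * (a + b)) - β * (a * (1 + b) + b * (1 + a))) =
      (2 + (1 - β) * (a + b)) * (γ * (1 + (1 - β) * a) - β * (a * (1 + a))) +
        β * (a - b) * ((1 + a) ^ 2 - β * a ^ 2) := by
    ring
  have hN : 0 < β * (a - b) * ((1 + a) ^ 2 - β * a ^ 2) := by
    have : 0 < (1 + a) ^ 2 - β * a ^ 2 := by nlinarith [mul_pos (hb.trans hab) hu]
    have := sub_pos.2 hab
    positivity
  have hK : 0 < γ * (2 + (1 - β) * (a + b)) - β * (a * (1 + b) + b * (1 + a)) := by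
    nlinarith [mul_nonneg (by linarith : (0 : ℝ) ≤ 2 + (1 - β) * (a + b)) (sub_nonneg.2 hcrit)]
  rw [← sub_pos, ffunOfG_sub_ffunOfG hγ hβ]
  have := sub_pos.2 hab
  positivity

end ffunOfG

section ffun

variable {γ β : ℝ}

lemma ffun_pos (hγ : 0 < γ) (hβ : 0 < β) {ρ : ℝ} (hρ : 0 < ρ) : 0 < ffun γ β ρ := by
  rw [ffun_eq_ffunOfG_gfun hγ.le hβ.ne' hρ]
  exact ffunOfG_pos hγ hβ (gfun_pos hρ) (one_add_one_sub_mul_gfun_pos hρ)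

lemma ffun_strictMonoOn (hγ : 0 < γ) (hβ : 0 < β) : StrictMonoOn (ffun γ β) (Ioc 0 (β / γ)) := by
  intro ρ₁ ⟨hρ₁, _⟩ ρ₂ ⟨hρ₂, hρ₂le⟩ h12
  rw [ffun_eq_ffunOfG_gfun hγ.le hβ.ne' hρ₁, ffun_eq_ffunOfG_gfun hγ.le hβ.ne' hρ₂]
  refine ffunOfG_lt_of_mul_le hγ hβ (gfun_pos hρ₂) (gfun_strictAntiOn β hρ₁ hρ₂ h12)
    (one_add_one_sub_mul_gfun_pos hρ₁) (one_add_one_sub_mul_gfun_pos hρ₂) ?_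
  rw [← mul_gfun_mul_one_add_gfun hρ₂]
  have := gfun_pos (β := β) hρ₂
  have := mul_le_mul_of_nonneg_right ((le_div_iff₀' hγ).1 hρ₂le)
    (by positivity : 0 ≤ gfun β ρ₂ * (1 + gfun β ρ₂))
  linarith

lemma ffun_strictAntiOn (hγ : 0 < γ) (hβ : 0 < β) : StrictAntiOn (ffun γ β) (Ici (β / γ)) := by
  intro ρ₁ (hρ₁le : β / γ ≤ ρ₁) ρ₂ (hρ₂le : β / γ ≤ ρ₂) h12
  have hρ₁ : 0 < ρ₁ := (div_pos hβ hγ).trans_le hρ₁le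
  have hρ₂ : 0 < ρ₂ := hρ₁.trans h12
  rw [ffun_eq_ffunOfG_gfun hγ.le hβ.ne' hρ₁, ffun_eq_ffunOfG_gfun hγ.le hβ.ne' hρ₂]
  refine ffunOfG_lt_of_le_mul hγ hβ (gfun_pos hρ₂) (gfun_strictAntiOn β hρ₁ hρ₂ h12)
    (one_add_one_sub_mul_gfun_pos hρ₁) (one_add_one_sub_mul_gfun_pos hρ₂) ?_
  rw [← mul_gfun_mul_one_add_gfun hρ₁]
  have := gfun_pos (β := β) hρ₁
  have := mul_le_mul_of_nonneg_right ((div_le_iff₀' hγ).1 hρ₁le)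
    (by positivity : 0 ≤ gfun β ρ₁ * (1 + gfun β ρ₁))
  linarith

end ffun

lemma sum_mul_log_one_add_mul_lt {ι : Type*} [Fintype ι] {w p x y : ι → ℝ}
    (hw : ∀ i, 0 ≤ w i) (hp : ∀ i, 0 ≤ p i) (hx : ∀ i, 0 ≤ x i) (hxy : ∀ i, x i < y i)
    (hwp : ∃ i, 0 < w i * p i) :
    ∑ i, w i * Real.log (1 + p i * x i) < ∑ i, w i * Real.log (1 + p i * y i) := by
  have hpos : ∀ i, 0 < 1 + p i * x i := fun i => by nlinarith [mul_nonneg (hp i) (hx i)]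
  obtain ⟨i₀, hi₀⟩ := hwp
  have hw₀ : 0 < w i₀ := pos_of_mul_pos_left hi₀ (hp i₀)
  have hp₀ : 0 < p i₀ := pos_of_mul_pos_right hi₀ (hw i₀)
  refine Finset.sum_lt_sum (fun i _ => ?_) ⟨i₀, Finset.mem_univ _, ?_⟩
  · have := hp i
    have := hw i
    gcongr
    · exact hpos i
    · exact (hxy i).le
  · gcongr
    · exact hpos i₀
    · exact hxy i₀

/-- With R(ρ) := Σ_j β_j·log(1 + p_j·f(γ_j,β,ρ)), if ρ* > 0
maximizes R over (0,∞), then β/γ_1 ≤ ρ* ≤ β/γ_L. -/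
theorem optimal_rho_interval (L : ℕ) (hL : 1 ≤ L) (β : ℝ) (hβ : 0 < β)
    (γ : Fin L → ℝ) (hγpos : ∀ j, 0 < γ j)
    (hγsorted : ∀ i j : Fin L, i ≤ j → γ j ≤ γ i)
    (βv p : Fin L → ℝ) (hβv : ∀ j, 0 ≤ βv j) (hp : ∀ j, 0 ≤ p j)
    (hex : ∃ j, 0 < βv j * p j)
    (ρstar : ℝ) (hρstar : 0 < ρstar)
    (hmax : ∀ ρ : ℝ, 0 < ρ →
      ∑ j, βv j * Real.log (1 + p j * ffun (γ j) β ρ) ≤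
        ∑ j, βv j * Real.log (1 + p j * ffun (γ j) β ρstar)) :
    β / γ ⟨0, hL⟩ ≤ ρstar ∧ ρstar ≤ β / γ ⟨L - 1, by omega⟩ := by
  have not_improvable : ∀ ρ, 0 < ρ → ¬ ∀ j, ffun (γ j) β ρstar < ffun (γ j) β ρ :=
    fun ρ hρ hlt => (hmax ρ hρ).not_gt <| sum_mul_log_one_add_mul_lt hβv hp
      (fun j => (ffun_pos (hγpos j) hβ hρstar).le) hlt hex
  have div_first_le : ∀ j, β / γ ⟨0, hL⟩ ≤ β / γ j := fun j =>
    div_le_div_of_nonneg_left hβ.le (hγpos j) (hγsorted _ _ (Fin.le_def.2 (Nat.zero_le _)))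
  have div_le_last : ∀ j, β / γ j ≤ β / γ ⟨L - 1, by omega⟩ := fun j =>
    div_le_div_of_nonneg_left hβ.le (hγpos _) (hγsorted _ _ (Fin.le_def.2 (Nat.le_sub_one_of_lt j.2)))
  constructor
  · by_contra! h
    exact not_improvable _ (div_pos hβ (hγpos _)) fun j =>
      ffun_strictMonoOn (hγpos j) hβ ⟨hρstar, h.le.trans (div_first_le j)⟩
        ⟨div_pos hβ (hγpos _), div_first_le j⟩ h
  · by_contra! h
    exact not_improvable _ (div_pos hβ (hγpos _)) fun j =>
      ffun_strictAntiOn (hγpos j) hβ (div_le_last j) ((div_le_last j).trans h.le) h
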